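/- Let A ∈ (F[D,D^{-1}])^{ñ×ñ} be upper triangular with diagonal entries β_i D^{j_i}, β_i ∈ F\{0}, such that Σ_i j_i = 0, and suppose all nonzero entries in each column of A have the same exponent of D. Let β ∈ F \ {0,1} and Δ = [[A, βA],[A, A]] ∈ (F[D,D^{-1}])^{n×n} with n = 2ñ, and let Γ ∈ F^{n×n} be a permutation matrix. Then T(D) = Γ·Δ has determinant a nonzero element of F, and hence is invertible over F[D,D^{-1}]. -/

import Mathlib

/-!
Subtracting the top block row of `Δ = [[A, βA], [A, A]]` from the bottom one leaves the block
upper triangular matrix `[[A, βA], [0, (1 - β)A]]`, so `det Δ = (1 - β)^ñ (det A)^2`. Since `A`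
is triangular, `det A = ∏ β_i · D^{Σ j_i} = ∏ β_i`, and `det Γ = ±1`; hence `det (ΓΔ)` is a
nonzero constant, a unit of `F[D,D⁻¹]`.
-/

open LaurentPolynomial

namespace LaurentPolynomial

theorem T_sum {R ι : Type*} [CommSemiring R] (s : Finset ι) (j : ι → ℤ) :
    (T (∑ i ∈ s, j i) : R[T;T⁻¹]) = ∏ i ∈ s, T (j i) := by
  classical
  induction s using Finset.cons_induction with
  | empty => simp [T_zero]
  | cons a s ha ih => rw [Finset.prod_cons, Finset.sum_cons, T_add, ih]

end LaurentPolynomial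

namespace Matrix

theorem det_eq_C_of_isUpperTriangular {R ι : Type*} [CommRing R] [Fintype ι] [LinearOrder ι]
    {A : Matrix ι ι R[T;T⁻¹]} (hA : A.IsUpperTriangular) {β : ι → R} {j : ι → ℤ}
    (hdiag : ∀ i, A i i = C (β i) * T (j i)) (hsum : ∑ i, j i = 0) :
    A.det = C (∏ i, β i) := by
  rw [det_of_isUpperTriangular hA, Finset.prod_congr rfl fun i _ ↦ hdiag i,
    Finset.prod_mul_distrib, ← map_prod, ← T_sum, hsum, T_zero, mul_one]

theorem det_fromBlocks_smul_self {R n : Type*} [CommRing R] [Fintype n] [DecidableEq n]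
    (A : Matrix n n R) (b : R) :
    (fromBlocks A (b • A) A A).det = (1 - b) ^ Fintype.card n * A.det ^ 2 := by
  have hreduce : fromBlocks 1 0 (-1) 1 * fromBlocks A (b • A) A A
      = fromBlocks A (b • A) 0 ((1 - b) • A) := by
    rw [fromBlocks_multiply]
    congr 1 <;> simp [sub_smul, neg_add_eq_sub]
  have hdet := congrArg det hreduce
  rw [det_mul, det_fromBlocks_zero₁₂, det_fromBlocks_zero₂₁, det_smul] at hdet
  simp only [det_one, mul_one, one_mul] at hdet
  rw [hdet]
  ring

end Matrix

theorem stmt17_general {F : Type*} [Field F]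
    {nt : ℕ}
    (A : Matrix (Fin nt) (Fin nt) F[T;T⁻¹])
    (hupper : A.BlockTriangular (id : Fin nt → Fin nt))
    (β : Fin nt → F) (hβ0 : ∀ i, β i ≠ 0) (j : Fin nt → ℤ)
    (hdiag : ∀ i, A i i = C (β i) * T (j i)) (hsum : (∑ i, j i) = 0)
    (b : F) (hb1 : b ≠ 1)
    (p : Equiv.Perm (Fin nt ⊕ Fin nt)) :
    (∃ c : F, c ≠ 0 ∧
      ((p.permMatrix F[T;T⁻¹]) *
        Matrix.fromBlocks A (C b • A) A A).det = C c) ∧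
    ∃ P : Matrix (Fin nt ⊕ Fin nt) (Fin nt ⊕ Fin nt) F[T;T⁻¹],
      ((p.permMatrix F[T;T⁻¹]) * Matrix.fromBlocks A (C b • A) A A) * P = 1 ∧
      P * ((p.permMatrix F[T;T⁻¹]) * Matrix.fromBlocks A (C b • A) A A) = 1 := by
  set c : F := (Equiv.Perm.sign p : ℤ) * ((1 - b) ^ nt * (∏ i, β i) ^ 2)
  have hdet : ((p.permMatrix F[T;T⁻¹]) * Matrix.fromBlocks A (C b • A) A A).det = C c := by
    rw [Matrix.det_mul, Matrix.det_permutation, Matrix.det_fromBlocks_smul_self,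
      Matrix.det_eq_C_of_isUpperTriangular hupper hdiag hsum, Fintype.card_fin]
    simp only [c, map_mul, map_pow, map_sub, map_one, map_intCast]
  have hc : c ≠ 0 :=
    mul_ne_zero ((Equiv.Perm.sign p).isUnit.map (Int.castRingHom F)).ne_zero <|
      mul_ne_zero (pow_ne_zero _ (sub_ne_zero.2 hb1.symm))
        (pow_ne_zero _ (Finset.prod_ne_zero_iff.2 fun i _ ↦ hβ0 i))
  have hunit : IsUnit ((p.permMatrix F[T;T⁻¹]) * Matrix.fromBlocks A (C b • A) A A).det :=
    hdet ▸ (isUnit_iff_ne_zero.2 hc).map C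
  exact ⟨⟨c, hc, hdet⟩, _, Matrix.mul_nonsing_inv _ hunit, Matrix.nonsing_inv_mul _ hunit⟩

/-- let `A` be upper triangular over `F[D,D⁻¹]` with diagonal entries
`β_i D^{j_i}` (`β_i ≠ 0`, `Σ j_i = 0`), all nonzero entries in a column sharing the
same exponent of `D`; let `β ∈ F \ {0,1}`, `Δ = [[A, βA],[A, A]]` and `Γ` a
permutation matrix.  Then `det (Γ·Δ)` is a nonzero element of `F` and `Γ·Δ` is
invertible over the Laurent polynomials. -/
theorem stmt17 {F : Type*} [Field F] (hF : 2 < Nat.card F ∨ Infinite F)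
    {nt : ℕ} (hnt : 1 ≤ nt)
    (A : Matrix (Fin nt) (Fin nt) F[T;T⁻¹])
    (hupper : A.BlockTriangular (id : Fin nt → Fin nt))
    (β : Fin nt → F) (hβ0 : ∀ i, β i ≠ 0) (j : Fin nt → ℤ)
    (hdiag : ∀ i, A i i = C (β i) * T (j i)) (hsum : (∑ i, j i) = 0)
    (hcol : ∀ c : Fin nt, ∃ e : ℤ, ∀ r : Fin nt,
      A r c ≠ 0 → ∃ γ : F, A r c = C γ * T e)
    (b : F) (hb0 : b ≠ 0) (hb1 : b ≠ 1)
    (p : Equiv.Perm (Fin nt ⊕ Fin nt)) :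
    (∃ c : F, c ≠ 0 ∧
      ((p.permMatrix F[T;T⁻¹]) *
        Matrix.fromBlocks A (C b • A) A A).det = C c) ∧
    ∃ P : Matrix (Fin nt ⊕ Fin nt) (Fin nt ⊕ Fin nt) F[T;T⁻¹],
      ((p.permMatrix F[T;T⁻¹]) * Matrix.fromBlocks A (C b • A) A A) * P = 1 ∧
      P * ((p.permMatrix F[T;T⁻¹]) * Matrix.fromBlocks A (C b • A) A A) = 1 :=
  stmt17_general A hupper β hβ0 j hdiag hsum b hb1 p
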